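/- Let δ be the embedding of the n-dimensional Dirac delta via a Colombeau mollifier, δ(y) = bⁿψ(by) with b a strong positive infinite number, and let f : ρR̃ⁿ → ρC̃ be a GSF which is bounded by a tame polynomial at x, i.e. there exist r ∈ ℝ_{>0} and M, c ∈ ρR̃ with |d^j f(y)| ≤ M·c^j for all y in the closed finite ball of radius r around x and all j ∈ ℕ, where b/c is a strong infinite number. Then (δ * f)(x) = f(x). -/

import Mathlib

open MeasureTheory

namespace HFT

noncomputable section

/-- The index set `I = (0,1]`. -/
abbrev Idx : Type := {e : ℝ // 0 < e ∧ e ≤ 1}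

/-- "For ε small": the property holds for all sufficiently small indices. -/
def Ev (P : Idx → Prop) : Prop := ∃ e0 : Idx, ∀ e : Idx, e.1 ≤ e0.1 → P e

/-- A gauge: a net `ρ : I → (0,1]` tending to `0` as `ε → 0⁺`. -/
structure Gauge where
  ρ : Idx → ℝ
  pos : ∀ e, 0 < ρ e
  le_one : ∀ e, ρ e ≤ 1
  to_zero : ∀ δ : ℝ, 0 < δ → Ev fun e => ρ e < δ

variable (g : Gauge)

/-- A net of reals is ρ-moderate. -/
def ModerateR (x : Idx → ℝ) : Prop := ∃ N : ℕ, Ev fun e => |x e| ≤ (g.ρ e)⁻¹ ^ N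

/-- Two real nets are ρ-equivalent: they define the same generalized number. -/
def EquivR (x y : Idx → ℝ) : Prop := ∀ m : ℕ, Ev fun e => |x e - y e| ≤ g.ρ e ^ m

/-- ρ-negligible net. -/
def NegligibleR (x : Idx → ℝ) : Prop := EquivR g x fun _ => 0

/-- Order of the Robinson–Colombeau ring at the level of representatives. -/
def leR (x y : Idx → ℝ) : Prop :=
  ∃ z, NegligibleR g z ∧ Ev fun e => x e ≤ y e + z e

/-- Invertibility in the Robinson–Colombeau ring, at the level of representatives. -/
def InvR (x : Idx → ℝ) : Prop :=
  ∃ y, ModerateR g y ∧ EquivR g (fun e => x e * y e) fun _ => 1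

/-- Strict order: `x < y` iff `x ≤ y` and `y − x` is invertible. -/
def ltR (x y : Idx → ℝ) : Prop := leR g x y ∧ InvR g fun e => y e - x e

/-- `x > 0`: positive and invertible. -/
def PosInvR (x : Idx → ℝ) : Prop := ltR g (fun _ => 0) x

/-- Constant net. -/
def cR (c : ℝ) : Idx → ℝ := fun _ => c

/-- Positive infinite generalized number. -/
def InfiniteR (k : Idx → ℝ) : Prop := ∀ r : ℝ, 0 < r → leR g (cR r) k

/-- Strong infinite number: `|k| ≥ dρ^{−s}` for some real `s > 0`. -/
def StrongInfiniteR (k : Idx → ℝ) : Prop :=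
  ∃ s : ℝ, 0 < s ∧ Ev fun e => g.ρ e ^ (-s) ≤ |k e|

def dRhoPow (m : ℕ) : Idx → ℝ := fun e => g.ρ e ^ m
def dRhoNegPow (m : ℕ) : Idx → ℝ := fun e => (g.ρ e)⁻¹ ^ m

/-- Moderate complex nets. -/
def ModerateC (x : Idx → ℂ) : Prop := ModerateR g fun e => ‖x e‖

/-- Equivalent complex nets. -/
def EquivC (x y : Idx → ℂ) : Prop :=
  ∀ m : ℕ, Ev fun e => ‖x e - y e‖ ≤ g.ρ e ^ m

/- Subpoints: co-final subsets of the index set and relativized notions. -/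

/-- `L ⊆ I` is co-final: `0` is an accumulation point of `L`. -/
def CoFinal (L : Set Idx) : Prop := ∀ δ : ℝ, 0 < δ → ∃ e ∈ L, e.1 < δ

def EvOn (L : Set Idx) (P : Idx → Prop) : Prop :=
  ∃ e0 : Idx, ∀ e ∈ L, e.1 ≤ e0.1 → P e

def ModerateROn (L : Set Idx) (x : Idx → ℝ) : Prop :=
  ∃ N : ℕ, EvOn L fun e => |x e| ≤ (g.ρ e)⁻¹ ^ N

def EquivROn (L : Set Idx) (x y : Idx → ℝ) : Prop :=
  ∀ m : ℕ, EvOn L fun e => |x e - y e| ≤ g.ρ e ^ m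

def NegligibleROn (L : Set Idx) (x : Idx → ℝ) : Prop := EquivROn g L x fun _ => 0

def leROn (L : Set Idx) (x y : Idx → ℝ) : Prop :=
  ∃ z, NegligibleROn g L z ∧ EvOn L fun e => x e ≤ y e + z e

def InvROn (L : Set Idx) (x : Idx → ℝ) : Prop :=
  ∃ y, ModerateROn g L y ∧ EquivROn g L (fun e => x e * y e) fun _ => 1

def ltROn (L : Set Idx) (x y : Idx → ℝ) : Prop :=
  leROn g L x y ∧ InvROn g L fun e => y e - x e

/- Vector-valued generalized points. -/

abbrev En (n : ℕ) : Type := EuclideanSpace ℝ (Fin n)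

def ModerateV {n : ℕ} (x : Idx → En n) : Prop := ModerateR g fun e => ‖x e‖

def EquivV {n : ℕ} (x y : Idx → En n) : Prop :=
  ∀ m : ℕ, Ev fun e => ‖x e - y e‖ ≤ g.ρ e ^ m

def distNet {n : ℕ} (x y : Idx → En n) : Idx → ℝ := fun e => ‖x e - y e‖
def normNet {n : ℕ} (x : Idx → En n) : Idx → ℝ := fun e => ‖x e‖
def coord {n : ℕ} (x : Idx → En n) (i : Fin n) : Idx → ℝ := fun e => x e i

/-- Membership in the internal set generated by a net of subsets of `ℝⁿ`. -/
def MemInternal {n : ℕ} (A : Idx → Set (En n)) (x : Idx → En n) : Prop :=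
  ∃ x', EquivV g x x' ∧ Ev fun e => x' e ∈ A e

/-- Strong membership: every representative is eventually in `A_ε`. -/
def StrongMem {n : ℕ} (A : Idx → Set (En n)) (x : Idx → En n) : Prop :=
  ∀ x', EquivV g x x' → Ev fun e => x' e ∈ A e

/-- A (saturated) set of generalized points is open in the sharp topology. -/
def SharpOpen {n : ℕ} (S : Set (Idx → En n)) : Prop :=
  ∀ x, ModerateV g x → x ∈ S →
    ∃ r, PosInvR g r ∧ ∀ y, ModerateV g y → ltR g (distNet y x) r → y ∈ S

/-- Closed in the sharp topology. -/
def SharpClosed {n : ℕ} (S : Set (Idx → En n)) : Prop :=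
  ∀ x, ModerateV g x → x ∉ S →
    ∃ r, PosInvR g r ∧ ∀ y, ModerateV g y → ltR g (distNet y x) r → y ∉ S

/-- Closure in the sharp topology. -/
def SharpClosure {n : ℕ} (S : Set (Idx → En n)) : Set (Idx → En n) :=
  {x | ModerateV g x ∧ ∀ r, PosInvR g r → ∃ y ∈ S, ltR g (distNet y x) r}

/-- Sharply bounded set of generalized points. -/
def SharplyBounded {n : ℕ} (S : Set (Idx → En n)) : Prop :=
  ∃ R, PosInvR g R ∧ ∀ x ∈ S, ltR g (normNet x) R

/-- Functionally compact: an internal set generated by compacts which is sharply bounded. -/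
def FCompact {n : ℕ} (S : Set (Idx → En n)) : Prop :=
  (∃ A : Idx → Set (En n), (∀ e, IsCompact (A e)) ∧
    S = {x | ModerateV g x ∧ MemInternal g A x}) ∧ SharplyBounded g S

/-- Sharp ball of center `c` and radius `r`. -/
def BallG {n : ℕ} (c : Idx → En n) (r : Idx → ℝ) : Set (Idx → En n) :=
  {x | ModerateV g x ∧ ltR g (distNet x c) r}

/-- Pointwise sum of two sets of generalized points. -/
def sumSet {n : ℕ} (S T : Set (Idx → En n)) : Set (Idx → En n) :=
  {z | ∃ x ∈ S, ∃ y ∈ T, z = fun e => x e + y e}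

/-- The generalized box `[−h,h]ⁿ` as a set of generalized points. -/
def BoxSet {n : ℕ} (h : Idx → ℝ) : Set (Idx → En n) :=
  {x | ModerateV g x ∧ ∀ i : Fin n, leR g (fun e => |x e i|) h}

/-- All generalized (moderate) points. -/
def AllPts (n : ℕ) : Set (Idx → En n) := {x | ModerateV g x}

/- Derivatives of smooth maps on `ℝⁿ`. -/

noncomputable def pderivF {n : ℕ} {F : Type*} [NormedAddCommGroup F] [NormedSpace ℝ F]
    (i : Fin n) (f : En n → F) : En n → F :=
  fun x => fderiv ℝ f x (EuclideanSpace.single i 1)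

/-- Iterated partial derivative `∂^α`. -/
noncomputable def pderivMulti {n : ℕ} {F : Type*} [NormedAddCommGroup F] [NormedSpace ℝ F]
    (α : Fin n → ℕ) (f : En n → F) : En n → F :=
  (List.finRange n).foldr (fun i h => (pderivF i)^[α i] h) f

/-- The net `(f_ε)` of smooth functions defines a GSF on the set `X` of generalized points. -/
def IsGSFOn {n : ℕ} (X : Set (Idx → En n)) (f : Idx → En n → ℂ) : Prop :=
  (∀ e, ContDiff ℝ (⊤ : ℕ∞) (f e)) ∧
  ∀ x ∈ X, ∀ α : Fin n → ℕ,
    ModerateC g (fun e => pderivMulti α (f e) (x e)) ∧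
    ∀ x' ∈ X, EquivV g x x' →
      EquivC g (fun e => pderivMulti α (f e) (x e)) (fun e => pderivMulti α (f e) (x' e))

/-- Support of a GSF: sharp closure of the points where `|f(x)|` is positive invertible. -/
def suppNet {n : ℕ} (f : Idx → En n → ℂ) : Set (Idx → En n) :=
  SharpClosure g {x | ModerateV g x ∧ PosInvR g fun e => ‖f e (x e)‖}

/- Integration over hyperfinite boxes. -/

/-- The box `[−c,c]ⁿ ⊆ ℝⁿ`. -/
def box (n : ℕ) (c : ℝ) : Set (En n) := {v | ∀ i, |v i| ≤ c}

/-- ε-wise integral over the box `[−h_ε, h_ε]ⁿ`. -/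
noncomputable def intBox {n : ℕ} (f : Idx → En n → ℂ) (h : Idx → ℝ) : Idx → ℂ :=
  fun e => ∫ v in box n (h e), f e v

/-- Convolution of GSF, integrating over a box containing the support of the first factor. -/
noncomputable def convNet {n : ℕ} (f f' : Idx → En n → ℂ) (h : Idx → ℝ) :
    Idx → En n → ℂ :=
  fun e x => ∫ y in box n (h e), f e y * f' e (x - y)

/-- Dot product on `ℝⁿ`. -/
def dotP {n : ℕ} (x w : En n) : ℝ := ∑ i, x i * w i

/-- The hyperfinite Fourier transform `F_k(f)`. -/
noncomputable def FTnet {n : ℕ} (f : Idx → En n → ℂ) (k : Idx → ℝ) : Idx → En n → ℂ :=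
  fun e w => ∫ x in box n (k e), f e x * Complex.exp (-(Complex.I * (dotP x w : ℂ)))

/- One-dimensional versions. -/

def SharpClosure1 (S : Set (Idx → ℝ)) : Set (Idx → ℝ) :=
  {x | ModerateR g x ∧ ∀ r, PosInvR g r → ∃ y ∈ S, ltR g (fun e => |y e - x e|) r}

def supp1 (ψ : Idx → ℝ → ℂ) : Set (Idx → ℝ) :=
  SharpClosure1 g {x | ModerateR g x ∧ PosInvR g fun e => ‖ψ e (x e)‖}

def IsGSF1 (X : Set (Idx → ℝ)) (ψ : Idx → ℝ → ℂ) : Prop :=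
  (∀ e, ContDiff ℝ (⊤ : ℕ∞) (ψ e)) ∧
  ∀ x ∈ X, ∀ j : ℕ,
    ModerateC g (fun e => iteratedDeriv j (ψ e) (x e)) ∧
    ∀ x' ∈ X, EquivR g x x' →
      EquivC g (fun e => iteratedDeriv j (ψ e) (x e))
        (fun e => iteratedDeriv j (ψ e) (x' e))

/-- One-dimensional hyperfinite Fourier transform over `[−k,k]`. -/
noncomputable def FT1 (ψ : Idx → ℝ → ℂ) (k : Idx → ℝ) : Idx → ℝ → ℂ :=
  fun e w => ∫ x in Set.Icc (-(k e)) (k e), ψ e x * Complex.exp (-(Complex.I * ((x * w : ℝ) : ℂ)))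


/- ### Auxiliary lemmas for STATEMENT 18 -/

theorem Ev.mono {P Q : Idx → Prop} (h : Ev P) (himp : ∀ e, P e → Q e) : Ev Q := by
  obtain ⟨e0, he0⟩ := h
  exact ⟨e0, fun e he => himp e (he0 e he)⟩

theorem Ev.and {P Q : Idx → Prop} (hP : Ev P) (hQ : Ev Q) : Ev fun e => P e ∧ Q e := by
  obtain ⟨a, ha⟩ := hP
  obtain ⟨b, hb⟩ := hQ
  refine ⟨⟨min a.1 b.1, lt_min a.2.1 b.2.1, le_trans (min_le_left _ _) a.2.2⟩, ?_⟩
  intro e he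
  exact ⟨ha e (le_trans he (min_le_left _ _)), hb e (le_trans he (min_le_right _ _))⟩

theorem coord_le_norm {n : ℕ} (v : En n) (i : Fin n) : |v i| ≤ ‖v‖ := by
  rw [EuclideanSpace.norm_eq, ← Real.sqrt_sq_eq_abs]
  apply Real.sqrt_le_sqrt
  simpa [Real.norm_eq_abs, sq_abs] using
    Finset.single_le_sum (f := fun j => ‖v j‖ ^ 2) (fun j _ => sq_nonneg _) (Finset.mem_univ i)

theorem integrable_supp {n : ℕ} {E : Type*} [NormedAddCommGroup E] (f : En n → E)
    (hc : Continuous f) (hs : ∀ v, f v ≠ 0 → ‖v‖ ≤ 1) : Integrable f := by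
  apply hc.integrable_of_hasCompactSupport
  apply HasCompactSupport.intro (isCompact_closedBall (0 : En n) 1)
  intro v hv
  by_contra h
  exact hv (mem_closedBall_zero_iff.mpr (hs v h))

theorem iterDeriv_line {n : ℕ} (f : En n → ℂ) (hf : ContDiff ℝ (⊤ : ℕ∞) f) (x u : En n) :
    ∀ (k : ℕ) (t : ℝ), iteratedDeriv k (fun s : ℝ => f (x + s • u)) t
      = iteratedFDeriv ℝ k f (x + t • u) (fun _ => u) := by
  intro k
  induction k with
  | zero => intro t; simp
  | succ k ih =>
    intro t
    have hgk : iteratedDeriv k (fun s : ℝ => f (x + s • u))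
        = fun s => iteratedFDeriv ℝ k f (x + s • u) (fun _ => u) := funext fun s => ih s
    rw [iteratedDeriv_succ, hgk]
    have hline : HasDerivAt (fun s : ℝ => x + s • u) u t := by
      simpa using ((hasDerivAt_id t).smul_const u).const_add x
    have hdiff : DifferentiableAt ℝ (iteratedFDeriv ℝ k f) (x + t • u) :=
      (hf.differentiable_iteratedFDeriv
        (by exact_mod_cast lt_top_iff_ne_top.mpr (by simp))).differentiableAt
    have h3 : HasDerivAt (fun s : ℝ => iteratedFDeriv ℝ k f (x + s • u))
        (fderiv ℝ (iteratedFDeriv ℝ k f) (x + t • u) u) t :=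
      hdiff.hasFDerivAt.comp_hasDerivAt t hline
    have h4 := ((ContinuousMultilinearMap.apply ℝ (fun _ : Fin k => En n) ℂ
        (fun _ => u)).hasFDerivAt.comp_hasDerivAt t h3)
    have h5 : iteratedFDeriv ℝ (k+1) f (x + t • u) (fun _ => u)
        = (fderiv ℝ (iteratedFDeriv ℝ k f) (x + t • u) u) (fun _ => u) := by
      rw [iteratedFDeriv_succ_apply_left]
      congr 1
    rw [h5]
    exact h4.deriv

theorem taylor_line {n : ℕ} (f : En n → ℂ) (hf : ContDiff ℝ (⊤ : ℕ∞) f) (x u : En n) (j : ℕ) (K : ℝ)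
    (hK : ∀ w : En n, ‖w - x‖ ≤ ‖u‖ → ‖iteratedFDeriv ℝ (j+1) f w‖ ≤ K) :
    ‖f (x + u) - ∑ k ∈ Finset.range (j+1),
        ((k.factorial : ℝ))⁻¹ • iteratedFDeriv ℝ k f x (fun _ => u)‖ ≤ K * ‖u‖ ^ (j+1) := by
  have hK0 : 0 ≤ K := le_trans (norm_nonneg _) (hK x (by simp))
  set φ : ℝ → ℂ := fun s => f (x + s • u) with hφdef
  have hφ : ContDiff ℝ (⊤ : ℕ∞) φ :=
    hf.comp (contDiff_const.add (contDiff_id.smul contDiff_const))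
  have hwithin : ∀ (k : ℕ), ∀ t ∈ Set.Icc (0:ℝ) 1,
      iteratedDerivWithin k φ (Set.Icc 0 1) t = iteratedDeriv k φ t := by
    intro k t ht
    have h0 : ContDiff ℝ (⊤:ℕ∞) φ := hφ.of_le (by simp)
    have h1 := contDiff_iff_ftaylorSeries.mp h0
    have h2 : HasFTaylorSeriesUpToOn (⊤:ℕ∞) φ (ftaylorSeries ℝ φ) (Set.Icc 0 1) :=
      h1.hasFTaylorSeriesUpToOn _
    rw [iteratedDerivWithin, iteratedDeriv]
    rw [← h2.eq_iteratedFDerivWithin_of_uniqueDiffOn (by exact_mod_cast le_top)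
        (uniqueDiffOn_Icc one_pos) ht, h1.eq_iteratedFDeriv (by exact_mod_cast le_top)]
  have prodnorm : ∀ k : ℕ, ∏ _i : Fin k, ‖u‖ = ‖u‖ ^ k := by
    intro k; rw [Finset.prod_const, Finset.card_univ, Fintype.card_fin]
  have hC : ∀ t ∈ Set.Icc (0:ℝ) 1,
      ‖iteratedDerivWithin (j+1) φ (Set.Icc 0 1) t‖ ≤ K * ‖u‖ ^ (j+1) := by
    intro t ht
    rw [hwithin _ t ht, iterDeriv_line f hf x u (j+1) t]
    calc ‖iteratedFDeriv ℝ (j+1) f (x + t • u) (fun _ => u)‖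
        ≤ ‖iteratedFDeriv ℝ (j+1) f (x + t • u)‖ * ∏ _i : Fin (j+1), ‖u‖ :=
          ContinuousMultilinearMap.le_opNorm _ _
      _ ≤ K * ‖u‖ ^ (j+1) := by
          rw [prodnorm]
          apply mul_le_mul_of_nonneg_right _ (pow_nonneg (norm_nonneg u) _)
          apply hK
          have : x + t • u - x = t • u := by abel
          rw [this, norm_smul, Real.norm_eq_abs]
          calc |t| * ‖u‖ ≤ 1 * ‖u‖ := by
                apply mul_le_mul_of_nonneg_right _ (norm_nonneg u)
                rw [abs_le]; exact ⟨le_trans (by norm_num) ht.1, ht.2⟩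
            _ = ‖u‖ := one_mul _
  have htb := taylor_mean_remainder_bound (f := φ) (a := 0) (b := 1) (n := j)
    zero_le_one (hφ.contDiffOn.of_le (by exact_mod_cast le_top)) (Set.right_mem_Icc.mpr zero_le_one) hC
  rw [taylor_within_apply] at htb
  have hsum : ∑ k ∈ Finset.range (j+1), ((k.factorial : ℝ)⁻¹ * ((1:ℝ) - 0) ^ k) •
        iteratedDerivWithin k φ (Set.Icc 0 1) 0
      = ∑ k ∈ Finset.range (j+1),
        ((k.factorial : ℝ))⁻¹ • iteratedFDeriv ℝ k f x (fun _ => u) := by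
    apply Finset.sum_congr rfl
    intro k _
    rw [hwithin k 0 (Set.left_mem_Icc.mpr zero_le_one), iterDeriv_line f hf x u k 0]
    simp
  rw [hsum] at htb
  have hφ1 : φ 1 = f (x + u) := by rw [hφdef]; simp
  rw [hφ1] at htb
  refine le_trans htb ?_
  rw [sub_zero, one_pow, mul_one]
  apply div_le_self (mul_nonneg hK0 (pow_nonneg (norm_nonneg u) _))
  exact_mod_cast j.factorial_pos

theorem moment_zero {n : ℕ} (ψ : En n → ℝ) (hψc : Continuous ψ)
    (hsupp : ∀ v, ψ v ≠ 0 → ‖v‖ ≤ 1)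
    {k : ℕ} (W : ContinuousMultilinearMap ℝ (fun _ : Fin k => En n) ℂ)
    (j : ℕ) (hk1 : 1 ≤ k) (hkj : k ≤ j)
    (hmom : ∀ α : Fin n → ℕ, 1 ≤ (∑ i, α i) → (∑ i, α i) ≤ j →
      (∫ v : En n, (∏ i, v i ^ α i) * ψ v) = 0) :
    ∫ v : En n, ψ v • W (fun _ => v) = 0 := by
  classical
  have hrep : ∀ v : En n, (∑ i : Fin n, v i • EuclideanSpace.single i (1:ℝ)) = v := by
    intro v
    simpa [EuclideanSpace.basisFun_apply] using
      (EuclideanSpace.basisFun (Fin n) ℝ).toBasis.sum_repr v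
  have hexp : ∀ v : En n, ψ v • W (fun _ => v)
      = ∑ m ∈ Fintype.piFinset (fun _ : Fin k => (Finset.univ : Finset (Fin n))),
        (ψ v * ∏ i : Fin k, v (m i)) • W (fun i => EuclideanSpace.single (m i) (1:ℝ)) := by
    intro v
    have hW : W (fun _ : Fin k => v)
        = ∑ m ∈ Fintype.piFinset (fun _ : Fin k => (Finset.univ : Finset (Fin n))),
          (∏ i : Fin k, v (m i)) • W (fun i => EuclideanSpace.single (m i) (1:ℝ)) := by
      conv_lhs => rw [show (fun _ : Fin k => v)
        = fun _ : Fin k => ∑ i : Fin n, v i • EuclideanSpace.single i (1:ℝ) from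
          funext fun _ => (hrep v).symm]
      rw [W.map_sum_finset (fun _ i => v i • EuclideanSpace.single i (1:ℝ)) (fun _ => Finset.univ)]
      exact Finset.sum_congr rfl fun m _ =>
        W.map_smul_univ (fun i => v (m i)) (fun i => EuclideanSpace.single (m i) (1:ℝ))
    rw [hW, Finset.smul_sum]
    exact Finset.sum_congr rfl fun m _ => smul_smul _ _ _
  have hply : ∀ (m : Fin k → Fin n) (v : En n), (∏ i : Fin k, v (m i))
      = ∏ jj : Fin n, v jj ^ (Finset.univ.filter fun i => m i = jj).card := by
    intro m v
    rw [Finset.prod_comp (fun jj => v jj) m]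
    exact Finset.prod_subset (Finset.subset_univ _) (fun jj _ hjj => by
      rw [Finset.card_eq_zero.mpr (Finset.filter_eq_empty_iff.mpr
        (fun i _ h => hjj (Finset.mem_image.mpr ⟨i, Finset.mem_univ i, h⟩))), pow_zero])
  have hcard : ∀ m : Fin k → Fin n,
      (∑ jj : Fin n, (Finset.univ.filter fun i => m i = jj).card) = k := by
    intro m
    rw [← Finset.card_eq_sum_card_fiberwise (fun i _ => Finset.mem_univ (m i))]
    simp
  have hintm : ∀ m : Fin k → Fin n,
      (∫ v : En n, (ψ v * ∏ i : Fin k, v (m i)) •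
        W (fun i => EuclideanSpace.single (m i) (1:ℝ))) = 0 := by
    intro m
    rw [integral_smul_const]
    have : (∫ v : En n, ψ v * ∏ i : Fin k, v (m i)) = 0 := by
      have heq : (fun v : En n => ψ v * ∏ i : Fin k, v (m i))
          = fun v : En n => (∏ jj : Fin n,
              v jj ^ (Finset.univ.filter fun i => m i = jj).card) * ψ v := by
        funext v; rw [hply m v, mul_comm]
      rw [heq]
      exact hmom _ (by rw [hcard m]; exact hk1) (by rw [hcard m]; exact hkj)
    rw [this, zero_smul]
  calc (∫ v : En n, ψ v • W (fun _ => v))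
      = ∫ v : En n, ∑ m ∈ Fintype.piFinset (fun _ : Fin k => (Finset.univ : Finset (Fin n))),
          (ψ v * ∏ i : Fin k, v (m i)) • W (fun i => EuclideanSpace.single (m i) (1:ℝ)) := by
        exact integral_congr_ae (Filter.Eventually.of_forall hexp)
    _ = ∑ m ∈ Fintype.piFinset (fun _ : Fin k => (Finset.univ : Finset (Fin n))),
          ∫ v : En n, (ψ v * ∏ i : Fin k, v (m i)) •
            W (fun i => EuclideanSpace.single (m i) (1:ℝ)) := by
        apply integral_finset_sum
        intro m _
        apply integrable_supp _ ?_ ?_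
        · apply Continuous.fun_smul ?_ continuous_const
          exact hψc.mul (continuous_finset_prod _ fun i _ =>
            (EuclideanSpace.proj (𝕜 := ℝ) (m i)).continuous)
        · intro v hv
          apply hsupp v
          intro h0
          apply hv
          rw [h0, zero_mul, zero_smul]
    _ = 0 := by
        rw [Finset.sum_congr rfl fun m _ => hintm m, Finset.sum_const, smul_zero]

theorem keyEps {n : ℕ} (f : En n → ℂ) (hf : ContDiff ℝ (⊤ : ℕ∞) f) (ψ : En n → ℝ)
    (hψ : ContDiff ℝ (⊤ : ℕ∞) ψ)
    (hsupp : ∀ v, ψ v ≠ 0 → ‖v‖ ≤ 1) (hint : (∫ v : En n, ψ v) = 1)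
    (habs : (∫ v : En n, |ψ v|) ≤ 2)
    (j : ℕ) (hmom : ∀ α : Fin n → ℕ, 1 ≤ (∑ i, α i) → (∑ i, α i) ≤ j →
      (∫ v : En n, (∏ i, v i ^ α i) * ψ v) = 0)
    (b : ℝ) (hb1 : 1 ≤ b) (x : En n) (r : ℝ) (hr : 0 < r) (hbr : 1/r ≤ b)
    (K : ℝ) (hK : ∀ w : En n, dist w x ≤ r → ‖iteratedFDeriv ℝ (j+1) f w‖ ≤ K) :
    ‖(∫ y in box n 1, ((b ^ n * ψ (b • y) : ℝ) : ℂ) * f (x - y)) - f x‖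
      ≤ 2 * (K * (1/b) ^ (j+1)) := by
  have hb0 : 0 < b := lt_of_lt_of_le one_pos hb1
  have hbne : b ≠ 0 := ne_of_gt hb0
  have hK0 : 0 ≤ K := le_trans (norm_nonneg _) (hK x (by simp [hr.le]))
  have hbinv1 : (1:ℝ)/b ≤ 1 := by
    rw [div_le_one hb0]; exact hb1
  have hbinvr : (1:ℝ)/b ≤ r := by
    rw [div_le_iff₀ hb0]
    calc (1:ℝ) = r * (1/r) := by field_simp
      _ ≤ r * b := by apply mul_le_mul_of_nonneg_left hbr hr.le
  -- the integrand
  set F : En n → ℂ := fun y => ((b ^ n * ψ (b • y) : ℝ) : ℂ) * f (x - y) with hF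
  set G : En n → ℂ := fun v => ψ v • f (x - b⁻¹ • v) with hG
  -- step 1 : from box to univ
  have hF0 : ∀ y : En n, y ∉ box n 1 → F y = 0 := by
    intro y hy
    by_cases hψy : ψ (b • y) = 0
    · simp [hF, hψy]
    · exfalso
      apply hy
      intro i
      have h1 : ‖b • y‖ ≤ 1 := hsupp _ hψy
      have h2 : ‖y‖ ≤ 1/b := by
        rw [norm_smul, Real.norm_eq_abs, abs_of_pos hb0] at h1
        rw [le_div_iff₀ hb0, mul_comm]
        exact h1
      exact le_trans (coord_le_norm y i) (le_trans h2 hbinv1)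
  have step1 : (∫ y in box n 1, F y) = ∫ y, F y :=
    setIntegral_eq_integral_of_forall_compl_eq_zero hF0
  -- step 2 : change of variables
  have hFG : ∀ y : En n, F y = (b:ℂ)^n * G (b • y) := by
    intro y
    have : b⁻¹ • b • y = y := by rw [smul_smul, inv_mul_cancel₀ hbne, one_smul]
    simp only [hF, hG, this]
    push_cast
    rw [Complex.real_smul]
    ring
  have step2 : (∫ y, F y) = ∫ v, G v := by
    calc (∫ y, F y) = ∫ y, (b:ℂ)^n * G (b • y) := by
          exact integral_congr_ae (Filter.Eventually.of_forall hFG)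
      _ = (b:ℂ)^n * ∫ y, G (b • y) := integral_const_mul _ _
      _ = (b:ℂ)^n * ((b ^ Module.finrank ℝ (En n))⁻¹ • ∫ v, G v) := by
          rw [MeasureTheory.Measure.integral_comp_smul volume G b, abs_of_pos (by positivity)]
      _ = ∫ v, G v := by
          rw [finrank_euclideanSpace_fin, Complex.real_smul]
          push_cast
          rw [← mul_assoc, mul_inv_cancel₀ (pow_ne_zero _ (Complex.ofReal_ne_zero.mpr hbne)), one_mul]
  -- step 3 : Taylor expansion
  set T : En n → ℂ := fun v => ∑ k ∈ Finset.range (j+1),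
      ((k.factorial : ℝ))⁻¹ • iteratedFDeriv ℝ k f x (fun _ => -(b⁻¹ • v)) with hT
  set R : En n → ℂ := fun v => f (x - b⁻¹ • v) - T v with hR
  have hcont_iter : ∀ k : ℕ, Continuous fun v : En n =>
      iteratedFDeriv ℝ k f x (fun _ : Fin k => -(b⁻¹ • v)) := by
    intro k
    exact (iteratedFDeriv ℝ k f x).cont.comp
      (continuous_pi fun _ => (continuous_const.fun_smul continuous_id).neg)
  have hcontf : Continuous fun v : En n => f (x - b⁻¹ • v) :=
    hf.continuous.comp (continuous_const.sub (continuous_const.fun_smul continuous_id))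
  have hGint : Integrable G := by
    apply integrable_supp _ ((hψ.continuous.fun_smul hcontf))
    intro v hv
    apply hsupp v
    intro h0
    apply hv
    simp [hG, h0]
  have hψT_int : Integrable (fun v => ψ v • T v) := by
    apply integrable_supp _ ?_ ?_
    · apply hψ.continuous.fun_smul
      exact continuous_finset_sum _ fun k _ => ((hcont_iter k).fun_const_smul _)
    · intro v hv
      apply hsupp v
      intro h0
      apply hv
      simp [h0]
  have hψR_int : Integrable (fun v => ψ v • R v) := by
    have : (fun v => ψ v • R v) = fun v => G v - ψ v • T v := by
      funext v; simp [hR, hG, smul_sub]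
    rw [this]
    exact hGint.sub hψT_int
  -- value of the Taylor-term integral
  have hIT : (∫ v : En n, ψ v • T v) = f x := by
    have hsplit : (∫ v : En n, ψ v • T v)
        = ∑ k ∈ Finset.range (j+1), ((k.factorial : ℝ))⁻¹ •
            ∫ v : En n, ψ v • iteratedFDeriv ℝ k f x (fun _ => -(b⁻¹ • v)) := by
      have h1 : (fun v : En n => ψ v • T v) = fun v => ∑ k ∈ Finset.range (j+1),
          ((k.factorial : ℝ))⁻¹ • (ψ v • iteratedFDeriv ℝ k f x (fun _ => -(b⁻¹ • v))) := by
        funext v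
        rw [hT, Finset.smul_sum]
        exact Finset.sum_congr rfl fun k _ => smul_comm _ _ _
      rw [h1, integral_finset_sum]
      · exact Finset.sum_congr rfl fun k _ => integral_smul _ _
      · intro k _
        apply integrable_supp _ (((hψ.continuous.fun_smul (hcont_iter k)).fun_const_smul _)) ?_
        intro v hv
        apply hsupp v
        intro h0
        apply hv
        simp [h0]
    have hterm : ∀ k ∈ Finset.range (j+1),
        (∫ v : En n, ψ v • iteratedFDeriv ℝ k f x (fun _ => -(b⁻¹ • v)))
        = (-b⁻¹)^k • ∫ v : En n, ψ v • iteratedFDeriv ℝ k f x (fun _ : Fin k => v) := by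
      intro k _
      have h2 : (fun v : En n => ψ v • iteratedFDeriv ℝ k f x (fun _ => -(b⁻¹ • v)))
          = fun v => (-b⁻¹)^k • (ψ v • iteratedFDeriv ℝ k f x (fun _ : Fin k => v)) := by
        funext v
        have : (fun _ : Fin k => -(b⁻¹ • v)) = fun _ : Fin k => (-b⁻¹) • v := by
          funext i; rw [neg_smul]
        rw [this, (iteratedFDeriv ℝ k f x).map_smul_univ (fun _ => -b⁻¹) (fun _ => v)]
        rw [Finset.prod_const, Finset.card_univ, Fintype.card_fin, smul_comm]
      rw [h2, integral_smul]
    rw [hsplit]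
    have hsum2 : (∑ k ∈ Finset.range (j+1), ((k.factorial : ℝ))⁻¹ •
          ∫ v : En n, ψ v • iteratedFDeriv ℝ k f x (fun _ => -(b⁻¹ • v)))
        = ∑ k ∈ Finset.range (j+1), ((k.factorial : ℝ))⁻¹ • ((-b⁻¹)^k •
          ∫ v : En n, ψ v • iteratedFDeriv ℝ k f x (fun _ : Fin k => v)) :=
      Finset.sum_congr rfl fun k hk => by rw [hterm k hk]
    rw [hsum2, Finset.sum_eq_single 0]
    · simp only [Nat.factorial_zero, Nat.cast_one, inv_one, pow_zero, one_smul]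
      have h3 : (fun v : En n => ψ v • iteratedFDeriv ℝ 0 f x (fun _ : Fin 0 => v))
          = fun v : En n => ψ v • f x := by
        funext v; rw [iteratedFDeriv_zero_apply]
      rw [h3, integral_smul_const, hint, one_smul]
    · intro k hk hk0
      rw [moment_zero ψ hψ.continuous hsupp (iteratedFDeriv ℝ k f x) j
          (Nat.one_le_iff_ne_zero.mpr hk0) (by
            have := Finset.mem_range.mp hk; omega) hmom]
      simp
    · intro h0
      exact absurd (Finset.mem_range.mpr (Nat.succ_pos j)) h0
  -- remainder bound
  have hRb : ∀ v : En n, ‖ψ v • R v‖ ≤ |ψ v| * (K * (1/b)^(j+1)) := by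
    intro v
    rw [norm_smul, Real.norm_eq_abs]
    by_cases hψv : ψ v = 0
    · simp [hψv]
    apply mul_le_mul_of_nonneg_left _ (abs_nonneg _)
    have hv1 : ‖v‖ ≤ 1 := hsupp v hψv
    have hnu : ‖-(b⁻¹ • v)‖ ≤ 1/b := by
      rw [norm_neg, norm_smul, Real.norm_eq_abs, abs_of_pos (show (0:ℝ) < b⁻¹ by positivity),
        one_div]
      calc b⁻¹ * ‖v‖ ≤ b⁻¹ * 1 := by
            apply mul_le_mul_of_nonneg_left hv1 (by positivity)
        _ = b⁻¹ := mul_one _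
    have htl := taylor_line f hf x (-(b⁻¹ • v)) j K (fun w hw => hK w (by
      rw [dist_eq_norm]
      exact le_trans hw (le_trans hnu hbinvr)))
    have hRv : R v = f (x + -(b⁻¹ • v)) - ∑ k ∈ Finset.range (j+1),
        ((k.factorial : ℝ))⁻¹ • iteratedFDeriv ℝ k f x (fun _ => -(b⁻¹ • v)) := by
      show f (x - b⁻¹ • v) - T v = _
      rw [sub_eq_add_neg x (b⁻¹ • v)]
    calc ‖R v‖ ≤ K * ‖-(b⁻¹ • v)‖^(j+1) := by rw [hRv]; exact htl
      _ ≤ K * (1/b)^(j+1) := by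
          apply mul_le_mul_of_nonneg_left _ hK0
          exact pow_le_pow_left₀ (norm_nonneg _) hnu _
  -- put everything together
  have herr : (∫ y in box n 1, F y) - f x = ∫ v : En n, ψ v • R v := by
    rw [step1, step2, ← hIT]
    rw [← integral_sub hGint hψT_int]
    apply integral_congr_ae (Filter.Eventually.of_forall ?_)
    intro v
    simp [hG, hR, smul_sub]
  rw [show ‖(∫ y in box n 1, F y) - f x‖ = ‖(∫ y in box n 1, F y) - f x‖ from rfl,
    herr]
  calc ‖∫ v : En n, ψ v • R v‖ ≤ ∫ v : En n, ‖ψ v • R v‖ := norm_integral_le_integral_norm _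
    _ ≤ ∫ v : En n, |ψ v| * (K * (1/b)^(j+1)) := by
        apply integral_mono hψR_int.norm ?_ hRb
        exact ((integrable_supp ψ hψ.continuous hsupp).abs).mul_const _
    _ = (∫ v : En n, |ψ v|) * (K * (1/b)^(j+1)) := integral_mul_const _ _
    _ ≤ 2 * (K * (1/b)^(j+1)) := by
        apply mul_le_mul_of_nonneg_right habs (by positivity)

/-- convolution with an embedded Dirac delta reproduces the value of a GSF
bounded by a tame polynomial at the point. -/
theorem delta_conv_eq (g : Gauge) {n : ℕ}
    (b : Idx → ℝ) (hbpos : ∀ e, 0 < b e) (hbmod : ModerateR g b)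
    (hbstrong : StrongInfiniteR g b)
    (ψ : Idx → En n → ℝ)
    (hψsmooth : ∀ e, ContDiff ℝ (⊤ : ℕ∞) (ψ e))
    (hψsupp : ∀ e, ∀ v : En n, ψ e v ≠ 0 → ‖v‖ ≤ 1)
    (hψeven : ∀ e, ∀ v : En n, ψ e (-v) = ψ e v)
    (hψint : ∀ e, (∫ v : En n, ψ e v) = 1)
    (hψmom : ∀ j : ℕ, Ev fun e => ∀ α : Fin n → ℕ,
      1 ≤ (∑ i, α i) → (∑ i, α i) ≤ j → (∫ v : En n, (∏ i, v i ^ α i) * ψ e v) = 0)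
    (hψabs : ∀ η : ℝ, 0 < η → Ev fun e => (∫ v : En n, |ψ e v|) ≤ 1 + η)
    (hψmod : ∀ α : Fin n → ℕ, ∃ p : ℕ, ∃ Cc : ℝ, Ev fun e =>
      ∀ v : En n, |pderivMulti α (ψ e) v| ≤ Cc * b e ^ p)
    (f : Idx → En n → ℂ) (hf : IsGSFOn g (AllPts g n) f)
    (x : Idx → En n) (hx : ModerateV g x)
    (r : ℝ) (hr : 0 < r) (M c : Idx → ℝ) (hM : ModerateR g M) (hc : ModerateR g c)
    (htame : ∀ y : Idx → En n, ModerateV g y → leR g (distNet y x) (cR r) →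
      ∀ j : ℕ, leR g (fun e => ‖iteratedFDeriv ℝ j (f e) (y e)‖)
        (fun e => M e * c e ^ j))
    (hbc : StrongInfiniteR g (fun e => b e / c e)) :
    EquivC g
      (fun e => ∫ y in box n 1, ((b e ^ n * ψ e (b e • y) : ℝ) : ℂ) * f e (x e - y))
      (fun e => f e (x e)) := by
  intro m
  obtain ⟨N, hN⟩ := hM
  obtain ⟨s, hs_pos, hsEv⟩ := hbc
  obtain ⟨s0, hs0_pos, hs0Ev⟩ := hbstrong
  set j : ℕ := ⌈((N:ℝ) + m + 2) / s⌉₊ with hjdef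
  have hjs : (N : ℝ) + m + 2 ≤ s * (j+1) := by
    have h2 := Nat.le_ceil (((N:ℝ) + m + 2) / s)
    calc (N:ℝ) + m + 2 = s * (((N:ℝ)+m+2)/s) := by field_simp
      _ ≤ s * (j+1) := by
          apply mul_le_mul_of_nonneg_left _ hs_pos.le
          refine le_trans h2 ?_
          push_cast
          linarith
  -- the point where the (j+1)-st derivative attains its max on the ball
  have hcball : ∀ e : Idx, ∃ w ∈ Metric.closedBall (x e) r, ∀ w' ∈ Metric.closedBall (x e) r,
      ‖iteratedFDeriv ℝ (j+1) (f e) w'‖ ≤ ‖iteratedFDeriv ℝ (j+1) (f e) w‖ := by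
    intro e
    obtain ⟨w, hw, hmax⟩ := (isCompact_closedBall (x e) r).exists_isMaxOn
      ⟨x e, Metric.mem_closedBall_self hr.le⟩
      (((hf.1 e).continuous_iteratedFDeriv (by exact_mod_cast le_top)).norm.continuousOn)
    exact ⟨w, hw, fun w' hw' => hmax hw'⟩
  choose y hymem hymax using hcball
  have hymod : ModerateV g y := by
    obtain ⟨Nx, hNx⟩ := hx
    refine ⟨Nx + 1, ?_⟩
    refine (hNx.and (g.to_zero (1/(1+r)) (by positivity))).mono ?_
    intro e he
    obtain ⟨h1, h2⟩ := he
    have hρpos := g.pos e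
    have h1' : ‖x e‖ ≤ (g.ρ e)⁻¹ ^ Nx := by rwa [abs_norm] at h1
    have hinv1 : (1:ℝ) ≤ (g.ρ e)⁻¹ ^ Nx :=
      one_le_pow₀ ((one_le_inv₀ hρpos).mpr (g.le_one e))
    have h2' : g.ρ e * (1+r) < 1 := by
      rw [lt_div_iff₀ (by positivity)] at h2
      linarith
    have h1r : 1 + r ≤ (g.ρ e)⁻¹ := by
      have := (mul_lt_mul_iff_right₀ hρpos).mp
        (lt_of_lt_of_eq h2' (mul_inv_cancel₀ hρpos.ne').symm)
      exact this.le
    rw [abs_norm]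
    calc ‖y e‖ = ‖x e + (y e - x e)‖ := by rw [add_sub_cancel]
      _ ≤ ‖x e‖ + ‖y e - x e‖ := norm_add_le _ _
      _ ≤ (g.ρ e)⁻¹ ^ Nx + r := by
          have := Metric.mem_closedBall.mp (hymem e)
          rw [dist_eq_norm] at this
          exact add_le_add h1' this
      _ ≤ (g.ρ e)⁻¹ ^ Nx * (1 + r) := by nlinarith [hr.le]
      _ ≤ (g.ρ e)⁻¹ ^ Nx * (g.ρ e)⁻¹ := by
          apply mul_le_mul_of_nonneg_left h1r (by positivity)
      _ = (g.ρ e)⁻¹ ^ (Nx + 1) := by rw [pow_succ]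
  have hyle : leR g (distNet y x) (cR r) := by
    refine ⟨fun _ => 0, fun m' => ⟨⟨1, one_pos, le_refl 1⟩, fun e _ => ?_⟩,
      ⟨⟨1, one_pos, le_refl 1⟩, fun e _ => ?_⟩⟩
    · simpa using pow_nonneg (g.pos e).le m'
    · show ‖y e - x e‖ ≤ r + 0
      rw [add_zero, ← dist_eq_norm]
      exact Metric.mem_closedBall.mp (hymem e)
  obtain ⟨z, hznegl, hzEv⟩ := htame y hymod hyle (j+1)
  have hδ0 : (0:ℝ) < min (1/2) (r ^ (s0⁻¹)) := by
    apply lt_min (by norm_num) (Real.rpow_pos_of_pos hr _)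
  have hbig := hN.and (hsEv.and (hs0Ev.and ((hψmom j).and ((hψabs 1 one_pos).and
    (hzEv.and ((hznegl (m+2)).and (g.to_zero _ hδ0)))))))
  refine hbig.mono ?_
  intro e he
  obtain ⟨h_M, h_bc, h_b, h_mom, h_abs, h_tame, h_z, h_ρδ⟩ := he
  have hρpos := g.pos e
  have hρ1 := g.le_one e
  have hρδ1 : g.ρ e ≤ 1/2 := le_of_lt (lt_of_lt_of_le h_ρδ (min_le_left _ _))
  have hρδ2 : g.ρ e ≤ r ^ (s0⁻¹) := le_of_lt (lt_of_lt_of_le h_ρδ (min_le_right _ _))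
  have hrs0 : g.ρ e ^ (s0 : ℝ) ≤ r := by
    calc g.ρ e ^ (s0:ℝ) ≤ (r ^ s0⁻¹) ^ (s0:ℝ) :=
          Real.rpow_le_rpow hρpos.le hρδ2 hs0_pos.le
      _ = r := by rw [← Real.rpow_mul hr.le, inv_mul_cancel₀ hs0_pos.ne', Real.rpow_one]
  have hbe : g.ρ e ^ (-s0) ≤ b e := by
    rw [abs_of_pos (hbpos e)] at h_b
    exact h_b
  have hrpow_s0 : g.ρ e ^ (-s0) = (g.ρ e ^ (s0:ℝ))⁻¹ := Real.rpow_neg hρpos.le s0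
  have hρs0_pos : 0 < g.ρ e ^ (s0:ℝ) := Real.rpow_pos_of_pos hρpos _
  have hρs0_le1 : g.ρ e ^ (s0:ℝ) ≤ 1 := Real.rpow_le_one hρpos.le hρ1 hs0_pos.le
  have hbe1 : (1:ℝ) ≤ b e := by
    refine le_trans ?_ hbe
    rw [hrpow_s0]
    exact (one_le_inv₀ hρs0_pos).mpr hρs0_le1
  have hbr : 1/r ≤ b e := by
    refine le_trans ?_ hbe
    rw [hrpow_s0, one_div]
    exact inv_anti₀ hρs0_pos hrs0
  set K : ℝ := M e * c e ^ (j+1) + z e with hKdef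
  have hKbound : ∀ w : En n, dist w (x e) ≤ r → ‖iteratedFDeriv ℝ (j+1) (f e) w‖ ≤ K :=
    fun w hw => le_trans (hymax e w (Metric.mem_closedBall.mpr hw)) h_tame
  have habs2 : (∫ v : En n, |ψ e v|) ≤ 2 := by linarith
  have hkey := keyEps (f e) (hf.1 e) (ψ e) (hψsmooth e) (hψsupp e) (hψint e) habs2
    j h_mom (b e) hbe1 (x e) r hr hbr K hKbound
  have hb0 : 0 < b e := hbpos e
  have hinvb : (0:ℝ) ≤ 1/(b e) := by positivity
  have hinvb1 : 1/(b e) ≤ 1 := by rw [div_le_one hb0]; exact hbe1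
  have hK_le : K ≤ |M e| * |c e| ^ (j+1) + g.ρ e ^ (m+2) := by
    have h1 : M e * c e^(j+1) ≤ |M e| * |c e|^(j+1) := by
      calc M e * c e^(j+1) ≤ |M e * c e^(j+1)| := le_abs_self _
        _ = |M e| * |c e|^(j+1) := by rw [abs_mul, abs_pow]
    have h2 : z e ≤ g.ρ e ^ (m+2) := by
      calc z e ≤ |z e| := le_abs_self _
        _ = |z e - 0| := by rw [sub_zero]
        _ ≤ g.ρ e ^ (m+2) := h_z
    rw [hKdef]
    linarith
  have hcb : |c e| / b e ≤ g.ρ e ^ (s:ℝ) := by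
    rcases eq_or_ne (c e) 0 with hc0 | hc0
    · rw [hc0, abs_zero, zero_div]
      positivity
    · have hcpos : 0 < |c e| := abs_pos.mpr hc0
      rw [abs_div, abs_of_pos hb0] at h_bc
      rw [div_le_iff₀ hb0]
      have h3 : g.ρ e ^ (-s) * |c e| ≤ b e := (le_div_iff₀ hcpos).mp h_bc
      calc |c e| = (g.ρ e ^ (s:ℝ)) * (g.ρ e ^ (-s) * |c e|) := by
            rw [← mul_assoc, ← Real.rpow_add hρpos, add_neg_cancel, Real.rpow_zero, one_mul]
        _ ≤ g.ρ e ^ (s:ℝ) * b e := by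
            apply mul_le_mul_of_nonneg_left h3 (Real.rpow_pos_of_pos hρpos s).le
  calc ‖(∫ v in box n 1, ((b e ^ n * ψ e (b e • v) : ℝ) : ℂ) * f e (x e - v))
        - f e (x e)‖
      ≤ 2 * (K * (1/(b e))^(j+1)) := hkey
    _ ≤ 2 * ((|M e| * |c e|^(j+1) + g.ρ e^(m+2)) * (1/(b e))^(j+1)) := by
        apply mul_le_mul_of_nonneg_left _ (by norm_num)
        apply mul_le_mul_of_nonneg_right hK_le (pow_nonneg hinvb _)
    _ = 2 * (|M e| * (|c e|/(b e))^(j+1) + g.ρ e^(m+2) * (1/(b e))^(j+1)) := by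
        rw [add_mul, mul_assoc, ← mul_pow, mul_one_div]
    _ ≤ 2 * ((g.ρ e)⁻¹^N * (g.ρ e ^ (s:ℝ))^(j+1) + g.ρ e^(m+2) * 1) := by
        apply mul_le_mul_of_nonneg_left _ (by norm_num)
        apply add_le_add
        · apply mul_le_mul h_M (pow_le_pow_left₀ (by positivity) hcb _)
            (by positivity) (by positivity)
        · apply mul_le_mul_of_nonneg_left (pow_le_one₀ hinvb hinvb1) (by positivity)
    _ ≤ 2 * (g.ρ e^(m+2) + g.ρ e^(m+2)) := by
        apply mul_le_mul_of_nonneg_left _ (by norm_num)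
        rw [mul_one]
        apply add_le_add_left
        have h4 : (g.ρ e ^ (s:ℝ))^(j+1) = g.ρ e ^ (s*((j:ℝ)+1)) := by
          rw [← Real.rpow_natCast (g.ρ e ^ (s:ℝ)) (j+1), ← Real.rpow_mul hρpos.le]
          push_cast
          ring_nf
        rw [h4]
        have h5 : g.ρ e ^ (s*((j:ℝ)+1)) ≤ g.ρ e ^ (((N+m+2:ℕ):ℝ)) := by
          apply Real.rpow_le_rpow_of_exponent_ge hρpos hρ1
          push_cast
          linarith
        have h6 : g.ρ e ^ (((N+m+2:ℕ):ℝ)) = g.ρ e ^ (N+m+2 : ℕ) := Real.rpow_natCast _ _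
        calc (g.ρ e)⁻¹^N * (g.ρ e ^ (s*((j:ℝ)+1)))
            ≤ (g.ρ e)⁻¹^N * g.ρ e^(N+m+2) := by
              apply mul_le_mul_of_nonneg_left (h6 ▸ h5) (by positivity)
          _ = g.ρ e^(m+2) := by
              rw [inv_pow, pow_add]
              field_simp
              ring
    _ = 4 * g.ρ e^(m+2) := by ring
    _ ≤ g.ρ e ^ m := by
        have h7 : g.ρ e^(m+2) = g.ρ e^m * g.ρ e^2 := by rw [pow_add]
        rw [h7]
        have h8 : 4 * g.ρ e ^ 2 ≤ 1 := by nlinarith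
        calc 4 * (g.ρ e ^ m * g.ρ e ^ 2) = g.ρ e ^ m * (4 * g.ρ e ^ 2) := by ring
          _ ≤ g.ρ e ^ m * 1 := mul_le_mul_of_nonneg_left h8 (pow_nonneg hρpos.le m)
          _ = g.ρ e ^ m := mul_one _


end

end HFT
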